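/- arXiv:2508.18868 — 4 statements merged into one kernel-verified Lean document; each statement's English description precedes it below -/
import Mathlib

section
/- Let 0<d<R<u, S_0>0, K_0 in (d*S_0, u*S_0), and P_0 = (1/R)*((u-R)/(u-d))*(K_0 - d*S_0). Define u_tilde = (u - R)*S_0/P_0 and d_tilde = K_0/P_0 - R*S_0/P_0. Then (R - u_tilde)/(R - u) = (R - d_tilde)/(R - d), and this common value is strictly positive. -/
theorem tilde_ratio_eq_and_pos (u d R S0 K0 : ℝ)
    (hd : 0 < d) (hdR : d < R) (hRu : R < u) (hS0 : 0 < S0)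
    (hK1 : d * S0 < K0) (hK2 : K0 < u * S0) :
    let P0 := (1 / R) * ((u - R) / (u - d)) * (K0 - d * S0)
    let utilde := (u - R) * S0 / P0
    let dtilde := K0 / P0 - R * S0 / P0
    (R - utilde) / (R - u) = (R - dtilde) / (R - d) ∧ (R - utilde) / (R - u) > 0 := by
  intro P0 utilde dtilde
  have hR : 0 < R := hd.trans hdR
  have hud : (0:ℝ) < u - d := by linarith
  have huR : (0:ℝ) < u - R := by linarith
  have hRd : (0:ℝ) < R - d := by linarith
  have hKd : (0:ℝ) < K0 - d * S0 := by linarith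
  have hP0 : (0:ℝ) < (1 / R) * ((u - R) / (u - d)) * (K0 - d * S0) :=
    mul_pos (mul_pos (by positivity) (div_pos huR hud)) hKd
  have key : (R - utilde) / (R - u) = (u * S0 - K0) / ((u - d) * ((1 / R) * ((u - R) / (u - d)) * (K0 - d * S0))) := by
    simp only [utilde, P0]
    rw [div_eq_div_iff (by intro h; nlinarith [sub_eq_zero.mp h] : R - u ≠ 0) (by positivity)]
    field_simp [(by linarith : (0:ℝ) < K0 - S0 * d).ne']
    ring
  have key2 : (R - dtilde) / (R - d) = (u * S0 - K0) / ((u - d) * ((1 / R) * ((u - R) / (u - d)) * (K0 - d * S0))) := by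
    simp only [dtilde, P0]
    rw [div_eq_div_iff (by positivity) (by positivity)]
    field_simp
    ring
  constructor
  · rw [key, key2]
  · rw [key]
    apply div_pos (by linarith) (by positivity)
end

section
/- Let 0<d<R<u, 0<p<1, S_0>0, K_0 in (d*S_0, u*S_0), P_0 the arbitrage-free put price, u_tilde = (u-R)*S_0/P_0, d_tilde = K_0/P_0 - R*S_0/P_0. For any real c, define g*(c) = (p*(R-u_tilde)*(R+c*(d-R)) + (1-p)*(R-d_tilde)*(R+c*(u-R)))/((d_tilde-R)*(u_tilde-R)) and f* = (p*(R-u)*R + (1-p)*(R-d)*R)/((u-R)*(d-R)). Then g*(c)*(u_tilde - R) + R + c*(u-R) = f**(u-R) + R, i.e. the up-state relative payoff of the optimal Kelly-with-option strategy equals that of the optimal Kelly strategy. -/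
set_option maxHeartbeats 2000000 in
theorem ko_up_payoff_eq_ks (u d R p S0 K0 c : ℝ)
    (hd : 0 < d) (hdR : d < R) (hRu : R < u) (hp0 : 0 < p) (hp1 : p < 1)
    (hS0 : 0 < S0) (hK1 : d * S0 < K0) (hK2 : K0 < u * S0) :
    let P0 := (1 / R) * ((u - R) / (u - d)) * (K0 - d * S0)
    let utilde := (u - R) * S0 / P0
    let dtilde := K0 / P0 - R * S0 / P0
    let gstar := (p * (R - utilde) * (R + c * (d - R)) + (1 - p) * (R - dtilde) * (R + c * (u - R)))
        / ((dtilde - R) * (utilde - R))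
    let fstar := (p * (R - u) * R + (1 - p) * (R - d) * R) / ((u - R) * (d - R))
    gstar * (utilde - R) + R + c * (u - R) = fstar * (u - R) + R := by
  intro P0 utilde dtilde gstar fstar
  have hR : 0 < R := hd.trans hdR
  have hud : 0 < u - d := by linarith
  have huR : 0 < u - R := by linarith
  have hKd : 0 < K0 - d * S0 := by linarith
  have hKu : 0 < u * S0 - K0 := by linarith
  have hP0 : 0 < P0 := by
    show 0 < (1 / R) * ((u - R) / (u - d)) * (K0 - d * S0)
    positivity
  have hPdef : P0 = (1 / R) * ((u - R) / (u - d)) * (K0 - d * S0) := rfl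
  have hu' : utilde = R * (u - d) * S0 / (K0 - d * S0) := by
    show (u - R) * S0 / P0 = _
    rw [hPdef]; field_simp
  have hd' : dtilde = R * (u - d) * (K0 - R * S0) / ((u - R) * (K0 - d * S0)) := by
    show K0 / P0 - R * S0 / P0 = _
    rw [hPdef]; field_simp
  have hut : 0 < utilde - R := by
    rw [hu', lt_sub_iff_add_lt, zero_add, lt_div_iff₀ (by positivity)]
    nlinarith [mul_pos hR hKu]
  have hdt : dtilde - R < 0 := by
    rw [hd', sub_neg, div_lt_iff₀ (by positivity)]
    nlinarith [mul_pos hR (mul_pos (show (0:ℝ) < R - d by linarith) hKu)]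
  show (p * (R - utilde) * (R + c * (d - R)) + (1 - p) * (R - dtilde) * (R + c * (u - R)))
        / ((dtilde - R) * (utilde - R)) * (utilde - R) + R + c * (u - R)
      = (p * (R - u) * R + (1 - p) * (R - d) * R) / ((u - R) * (d - R)) * (u - R) + R
  have hA : utilde - R ≠ 0 := ne_of_gt hut
  have hB : dtilde - R ≠ 0 := ne_of_lt hdt
  rw [hu'] at hA
  rw [hd'] at hB
  rw [hu', hd']
  have hden : K0 - d * S0 ≠ 0 := ne_of_gt hKd
  have hdRne : d - R ≠ 0 := by intro h; linarith
  have huRne : u - R ≠ 0 := ne_of_gt huR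
  have hApos : 0 < R * (u - d) * S0 - (K0 - d * S0) * R := by
    nlinarith [mul_pos hR hKu]
  have hBneg : R * (u - d) * (K0 - R * S0) - (u - R) * (K0 - d * S0) * R < 0 := by
    nlinarith [mul_pos hR (mul_pos (show (0:ℝ) < R - d by linarith) hKu)]
  have h1 : (u - d) * S0 - (K0 - d * S0) ≠ 0 := by nlinarith
  have h2 : (u - d) * (K0 - R * S0) - (K0 - d * S0) * (u - R) ≠ 0 := by nlinarith
  field_simp [ne_of_gt hApos, ne_of_lt hBneg]
  ring
end

section
/- Under the same setup, g*(c)*(d_tilde - R) + R + c*(d-R) = f**(d-R) + R, i.e. the down-state relative payoff of the optimal Kelly-with-option strategy equals that of the optimal Kelly strategy, for every real c. -/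
theorem ko_down_payoff_eq_ks (u d R p S0 K0 c : ℝ)
    (hd : 0 < d) (hdR : d < R) (hRu : R < u) (hp0 : 0 < p) (hp1 : p < 1)
    (hS0 : 0 < S0) (hK1 : d * S0 < K0) (hK2 : K0 < u * S0) :
    let P0 := (1 / R) * ((u - R) / (u - d)) * (K0 - d * S0)
    let utilde := (u - R) * S0 / P0
    let dtilde := K0 / P0 - R * S0 / P0
    let gstar := (p * (R - utilde) * (R + c * (d - R)) + (1 - p) * (R - dtilde) * (R + c * (u - R)))
        / ((dtilde - R) * (utilde - R))
    let fstar := (p * (R - u) * R + (1 - p) * (R - d) * R) / ((u - R) * (d - R))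
    gstar * (dtilde - R) + R + c * (d - R) = fstar * (d - R) + R := by
  intro P0 utilde dtilde gstar fstar
  have hR : (0:ℝ) < R := hd.trans hdR
  have hud : (0:ℝ) < u - d := by linarith
  have huR : (0:ℝ) < u - R := by linarith
  have huR' : u - R ≠ 0 := ne_of_gt huR
  have hdR' : d - R ≠ 0 := by intro h; linarith [sub_eq_zero.mp h]
  have hK : (0:ℝ) < K0 - d * S0 := by linarith
  have hP0 : (0:ℝ) < P0 := by
    have : P0 = (u - R) / (u - d) * (K0 - d * S0) / R := by unfold P0; ring
    rw [this]; positivity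
  have hP0' : P0 ≠ 0 := ne_of_gt hP0
  have hRP : R * (u - d) * P0 = (u - R) * (K0 - d * S0) := by
    unfold P0; field_simp
  have huT : R < utilde := by
    unfold utilde
    rw [lt_div_iff₀ hP0]
    nlinarith
  have hdT : dtilde < R := by
    unfold dtilde
    rw [div_sub_div_same, div_lt_iff₀ hP0]
    nlinarith
  have h1 : utilde - R ≠ 0 := by intro h; nlinarith [sub_eq_zero.mp h]
  have h2 : dtilde - R ≠ 0 := by intro h; nlinarith [sub_eq_zero.mp h]
  have key : (p * (R - utilde) * (R + c * (d - R)) + (1 - p) * (R - dtilde) * (R + c * (u - R)))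
      * (u - R) + c * (d - R) * (utilde - R) * (u - R)
      = (p * (R - u) * R + (1 - p) * (R - d) * R) * (utilde - R) := by
    unfold utilde dtilde P0
    field_simp [(show (0:ℝ) < K0 - S0 * d by linarith).ne']
    ring
  have hgl : gstar * (dtilde - R)
      = (p * (R - utilde) * (R + c * (d - R)) + (1 - p) * (R - dtilde) * (R + c * (u - R)))
        / (utilde - R) := by
    unfold gstar
    rw [div_mul_eq_mul_div, div_eq_div_iff (mul_ne_zero h2 h1) h1]
    ring
  have hfl : fstar * (d - R)
      = (p * (R - u) * R + (1 - p) * (R - d) * R) / (u - R) := by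
    unfold fstar
    rw [div_mul_eq_mul_div, div_eq_div_iff (mul_ne_zero huR' hdR') huR']
    ring
  rw [hgl, hfl]
  rw [add_assoc, add_comm R (c * (d - R)), ← add_assoc, div_add' _ _ _ h1,
    div_add' _ _ _ huR', div_add' _ _ _ h1, div_eq_div_iff h1 huR']
  linear_combination key
end

section
/- Under the same setup, if c < c_d(1) then for every g > 1 there exists c' in an open interval contained in (-infinity, c_d(1)) for which both relative payoffs are strictly positive; in particular, for every g>1 the interval (c_u(g), c_d(g)) is nonempty and contained in (-infinity, c_d(1)). -/
/-! The relative payoff `g * (x - R) + R + c * (y - R)` in a state with return `y` is affine in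
`c` with slope `y - R`, so it is positive exactly when `c` lies above its zero `c_u(g)` in the up
state and below its zero `c_d(g)` in the down state. Pricing the put risk-neutrally gives
`(R - d) ũ + (u - R) d̃ = R (u - d)`, which makes the gap
`c_d(g) - c_u(g) = R (u - d) / ((u - R) (R - d))` positive and independent of `g`. Since the put is
worthless in the up state, `d̃ < R`, so `c_d` is strictly decreasing and `c_d(g) < c_d(1)`
for `g > 1`. -/

/-- The value of `c` at which the relative payoff `g * (x - R) + R + c * (y - R)` vanishes. -/
noncomputable def breakEven (R y x g : ℝ) : ℝ := -(g * x + (1 - g) * R) / (y - R)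

section BreakEven

variable {R y x g c : ℝ}

theorem breakEven_lt_iff (hy : R < y) :
    breakEven R y x g < c ↔ 0 < g * (x - R) + R + c * (y - R) := by
  rw [breakEven, div_lt_iff₀ (sub_pos.2 hy)]
  constructor <;> intro h <;> linarith

theorem lt_breakEven_iff (hy : y < R) :
    c < breakEven R y x g ↔ 0 < g * (x - R) + R + c * (y - R) := by
  rw [breakEven, lt_div_iff_of_neg (sub_neg.2 hy)]
  constructor <;> intro h <;> linarith

theorem breakEven_strictAnti (hy : y < R) (hx : x < R) : StrictAnti (breakEven R y x) := by
  intro a b hab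
  refine div_lt_div_of_neg_of_lt (sub_neg.2 hy) ?_
  nlinarith

theorem breakEven_sub_breakEven {u d xu xd : ℝ} (huR : u ≠ R) (hdR : d ≠ R)
    (hpricing : xd * (u - R) + xu * (R - d) = R * (u - d)) :
    breakEven R d xd g - breakEven R u xu g = R * (u - d) / ((u - R) * (R - d)) := by
  have huR' : u - R ≠ 0 := sub_ne_zero.2 huR
  have hdR' : d - R ≠ 0 := sub_ne_zero.2 hdR
  have hRd' : R - d ≠ 0 := sub_ne_zero.2 hdR.symm
  rw [breakEven, breakEven, div_sub_div _ _ hdR' huR',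
    div_eq_div_iff (mul_ne_zero hdR' huR') (mul_ne_zero huR' hRd')]
  linear_combination (-g * (u - R) * (R - d)) * hpricing

end BreakEven

section PutPricing

variable {u d R S0 K0 P : ℝ}

theorem putPrice_mul (hR : R ≠ 0) (hud : u ≠ d) :
    (1 / R) * ((u - R) / (u - d)) * (K0 - d * S0) * (R * (u - d)) = (u - R) * (K0 - d * S0) := by
  have : u - d ≠ 0 := sub_ne_zero.2 hud
  field_simp

theorem putPrice_pos (hP : P * (R * (u - d)) = (u - R) * (K0 - d * S0)) (hR : 0 < R)
    (hdu : d < u) (hRu : R < u) (hK : d * S0 < K0) : 0 < P := by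
  have hRud : 0 < R * (u - d) := mul_pos hR (sub_pos.2 hdu)
  have : 0 < P * (R * (u - d)) := hP ▸ mul_pos (sub_pos.2 hRu) (sub_pos.2 hK)
  exact pos_of_mul_pos_left this hRud.le

theorem relativePayoff_pricing (hP : P * (R * (u - d)) = (u - R) * (K0 - d * S0))
    (hP0 : P ≠ 0) :
    (K0 / P - R * S0 / P) * (u - R) + (u - R) * S0 / P * (R - d) = R * (u - d) := by
  rw [div_sub_div_same, div_mul_eq_mul_div, div_mul_eq_mul_div, ← add_div, div_eq_iff hP0]
  linear_combination -hP

theorem relativePayoff_down_lt (hP : P * (R * (u - d)) = (u - R) * (K0 - d * S0))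
    (hP0 : 0 < P) (hdR : d < R) (hRu : R < u) (hK : K0 < u * S0) :
    K0 / P - R * S0 / P < R := by
  rw [← sub_div, div_lt_iff₀ hP0]
  refine lt_of_mul_lt_mul_right ?_ (sub_pos.2 (hdR.trans hRu)).le
  nlinarith [mul_lt_mul_of_pos_left hK (sub_pos.2 hdR)]

end PutPricing

theorem interval_nonempty_subset_general (u d R S0 K0 : ℝ)
    (hd : 0 < d) (hdR : d < R) (hRu : R < u)
    (hK1 : d * S0 < K0) (hK2 : K0 < u * S0) :
    let P0 := (1 / R) * ((u - R) / (u - d)) * (K0 - d * S0)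
    let utilde := (u - R) * S0 / P0
    let dtilde := K0 / P0 - R * S0 / P0
    let cu := fun g : ℝ => -(g * utilde + (1 - g) * R) / (u - R)
    let cd := fun g : ℝ => -(g * dtilde + (1 - g) * R) / (d - R)
    ∀ g : ℝ, g > 1 →
      (Set.Ioo (cu g) (cd g)).Nonempty ∧ Set.Ioo (cu g) (cd g) ⊆ Set.Iio (cd 1) ∧
      ∀ c' ∈ Set.Ioo (cu g) (cd g),
        g * (utilde - R) + R + c' * (u - R) > 0 ∧ g * (dtilde - R) + R + c' * (d - R) > 0 := by
  intro P0 utilde dtilde cu cd g hg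
  have hR : 0 < R := hd.trans hdR
  have hdu : d < u := hdR.trans hRu
  have hP0 : P0 * (R * (u - d)) = (u - R) * (K0 - d * S0) := putPrice_mul hR.ne' hdu.ne'
  have hP0_pos : 0 < P0 := putPrice_pos hP0 hR hdu hRu hK1
  have hgap : cu g < cd g := by
    have h := breakEven_sub_breakEven (g := g) hRu.ne' hdR.ne
      (relativePayoff_pricing hP0 hP0_pos.ne')
    have : 0 < R * (u - d) / ((u - R) * (R - d)) := by
      have := sub_pos.2 hdR; have := sub_pos.2 hRu; have := sub_pos.2 hdu; positivity
    change breakEven R u utilde g < breakEven R d dtilde g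
    linarith
  have hcd : cd g < cd 1 :=
    breakEven_strictAnti hdR (relativePayoff_down_lt hP0 hP0_pos hdR hRu hK2) hg
  refine ⟨Set.nonempty_Ioo.2 hgap, fun c hc => hc.2.trans hcd, fun c hc => ⟨?_, ?_⟩⟩
  · exact (breakEven_lt_iff hRu).1 hc.1
  · exact (lt_breakEven_iff hdR).1 hc.2

theorem interval_nonempty_subset (u d R S0 K0 : ℝ)
    (hd : 0 < d) (hdR : d < R) (hRu : R < u) (hS0 : 0 < S0)
    (hK1 : d * S0 < K0) (hK2 : K0 < u * S0) :
    let P0 := (1 / R) * ((u - R) / (u - d)) * (K0 - d * S0)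
    let utilde := (u - R) * S0 / P0
    let dtilde := K0 / P0 - R * S0 / P0
    let cu := fun g : ℝ => -(g * utilde + (1 - g) * R) / (u - R)
    let cd := fun g : ℝ => -(g * dtilde + (1 - g) * R) / (d - R)
    ∀ g : ℝ, g > 1 →
      (Set.Ioo (cu g) (cd g)).Nonempty ∧ Set.Ioo (cu g) (cd g) ⊆ Set.Iio (cd 1) ∧
      ∀ c' ∈ Set.Ioo (cu g) (cd g),
        g * (utilde - R) + R + c' * (u - R) > 0 ∧ g * (dtilde - R) + R + c' * (d - R) > 0 :=
  interval_nonempty_subset_general u d R S0 K0 hd hdR hRu hK1 hK2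
end
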